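/- Let 1 ≤ k ≤ n be integers. For every A ∈ M_2(ℂ)^{⊗n}, W_{≥k}[A] = 2k · Σ_{J ⊆ [n], |J| = k} Σ_{γ ∈ {1,2,3}^k} ∫_0^∞ (e^{2t} − 1)^{k−1} · e^{−2kt} · ‖P_t(∂_J^γ(A))‖_2² dt. -/

import Mathlib

open scoped BigOperators
open Matrix

noncomputable section

/-- The index set of the `n`-qubit Hilbert space `(ℂ²)^{⊗n}`. -/
abbrev QIdx (n : ℕ) := Fin n → Fin 2

/-- The algebra `M_2(ℂ)^{⊗n} ≅ M_{2^n}(ℂ)` of observables on `n` qubits. -/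
abbrev QOp (n : ℕ) := Matrix (QIdx n) (QIdx n) ℂ

/-- The four Pauli matrices `σ_0, σ_1, σ_2, σ_3`. -/
def pauli : Fin 4 → Matrix (Fin 2) (Fin 2) ℂ :=
  ![!![1, 0; 0, 1], !![0, 1; 1, 0], !![0, -Complex.I; Complex.I, 0], !![1, 0; 0, -1]]

/-- The Pauli string `σ_s = σ_{s_1} ⊗ ⋯ ⊗ σ_{s_n}`. -/
def pauliString {n : ℕ} (s : Fin n → Fin 4) : QOp n :=
  Matrix.of fun x y => ∏ j, pauli (s j) (x j) (y j)

/-- The normalized trace `τ(A) = 2^{-n} tr(A)`. -/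
def ntrace {n : ℕ} (A : QOp n) : ℂ := (2 ^ n : ℂ)⁻¹ * A.trace

/-- The Pauli (Fourier) coefficient `Â_s = τ(σ_s A)`. -/
def coef {n : ℕ} (A : QOp n) (s : Fin n → Fin 4) : ℂ := ntrace (pauliString s * A)

/-- The support `{j : s_j ≠ 0}` of a Pauli index. -/
def psupp {n : ℕ} (s : Fin n → Fin 4) : Finset (Fin n) :=
  Finset.univ.filter fun j => s j ≠ 0

/-- `τ(|A|^p)`, computed via the eigenvalues of `Aᴴ A` (so `|A| = (AᴴA)^{1/2}`). -/
def traceAbsPow {n : ℕ} (p : ℝ) (A : QOp n) : ℝ :=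
  (2 ^ n : ℝ)⁻¹ * ∑ i, ((Matrix.isHermitian_conjTranspose_mul_self A).eigenvalues i) ^ (p / 2)

/-- The normalized Schatten `p`-norm `‖A‖_p = τ(|A|^p)^{1/p}`. -/
def pnorm {n : ℕ} (p : ℝ) (A : QOp n) : ℝ := traceAbsPow p A ^ (1 / p)

/-- The operator norm `‖A‖ = ‖A‖_∞`. -/
def opNorm {n : ℕ} (A : QOp n) : ℝ := ‖Matrix.toEuclideanCLM (𝕜 := ℂ) A‖

/-- The `j`-th derivative `d_j(A) = (I - E_j)(A) = ∑_{s : s_j ≠ 0} Â_s σ_s`. -/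
def dOp {n : ℕ} (j : Fin n) (A : QOp n) : QOp n :=
  ∑ s ∈ Finset.univ.filter (fun s : Fin n → Fin 4 => s j ≠ 0), coef A s • pauliString s

/-- The derivative `d_J = ∏_{j ∈ J} d_j` for a subset `J ⊆ [n]`:
`d_J(A) = ∑_{s : J ⊆ supp s} Â_s σ_s`. -/
def dSet {n : ℕ} (J : Finset (Fin n)) (A : QOp n) : QOp n :=
  ∑ s ∈ Finset.univ.filter (fun s : Fin n → Fin 4 => ∀ j ∈ J, s j ≠ 0),
    coef A s • pauliString s

/-- The conditional expectation `E_J` killing all Pauli terms meeting `J`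
(i.e. the normalized partial trace `τ_J` over the qubits in `J`, re-embedded in
`M_2(ℂ)^{⊗n}` by tensoring with the identity on the qubits in `J`). -/
def eSet {n : ℕ} (J : Finset (Fin n)) (A : QOp n) : QOp n :=
  ∑ s ∈ Finset.univ.filter (fun s : Fin n → Fin 4 => ∀ j ∈ J, s j = 0),
    coef A s • pauliString s

/-- `σ_{k(j)}` : the Pauli matrix `σ_k` on the `j`-th factor and identity elsewhere. -/
def sigmaAt {n : ℕ} (j : Fin n) (k : Fin 4) : QOp n :=
  pauliString fun i => if i = j then k else 0

/-- The `j`-th `L^p`-influence `Inf^p_j[A] = ‖d_j(A)‖_p^p`. -/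
def infP {n : ℕ} (p : ℝ) (j : Fin n) (A : QOp n) : ℝ := traceAbsPow p (dOp j A)

/-- The total `L^p`-influence `Inf^p[A] = ∑_j Inf^p_j[A]`. -/
def infPTotal {n : ℕ} (p : ℝ) (A : QOp n) : ℝ := ∑ j, infP p j A

/-- The `L^p`-influence of a subset, `Inf^p_J[A] = ‖d_J(A)‖_p^p`. -/
def infPSet {n : ℕ} (p : ℝ) (J : Finset (Fin n)) (A : QOp n) : ℝ := traceAbsPow p (dSet J A)

/-- The variance `Var[A] = ‖A - τ(A)1‖_2²`. -/
def var {n : ℕ} (A : QOp n) : ℝ := traceAbsPow 2 (A - ntrace A • 1)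

/-- The noise operator `T_δ(A) = ∑_s δ^{|supp s|} Â_s σ_s`. -/
def noiseOp {n : ℕ} (δ : ℝ) (A : QOp n) : QOp n :=
  ∑ s : Fin n → Fin 4, ((δ : ℂ) ^ (psupp s).card * coef A s) • pauliString s

/-- The soft chunk `B_d = (T_{1-1/(3d)} - T_{1-1/(2d)})(A)`. -/
def softChunk {n : ℕ} (d : ℕ) (A : QOp n) : QOp n :=
  noiseOp (1 - 1 / (3 * (d : ℝ))) A - noiseOp (1 - 1 / (2 * (d : ℝ))) A

/-- `W_{≥k}[A] = ∑_{|supp s| ≥ k} |Â_s|²`. -/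
def wGE {n : ℕ} (k : ℕ) (A : QOp n) : ℝ :=
  ∑ s ∈ Finset.univ.filter (fun s : Fin n → Fin 4 => k ≤ (psupp s).card), ‖coef A s‖ ^ 2

/-- `W_{≈d}[A] = ∑_{d ≤ |supp s| < 2d} |Â_s|²`. -/
def wApprox {n : ℕ} (d : ℕ) (A : QOp n) : ℝ :=
  ∑ s ∈ Finset.univ.filter
      (fun s : Fin n → Fin 4 => d ≤ (psupp s).card ∧ (psupp s).card < 2 * d),
    ‖coef A s‖ ^ 2

/-- `W_J(A) = ∑_{|supp v ∩ J| = 1} |Â_v|²`. -/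
def wSet {n : ℕ} (J : Finset (Fin n)) (A : QOp n) : ℝ :=
  ∑ v ∈ Finset.univ.filter (fun v : Fin n → Fin 4 => (psupp v ∩ J).card = 1), ‖coef A v‖ ^ 2

/-- The noise stability `S_δ[A] = ∑_{s ≠ 0} δ^{|supp s|} |Â_s|²`. -/
def noiseStab {n : ℕ} (δ : ℝ) (A : QOp n) : ℝ :=
  ∑ s ∈ Finset.univ.filter (fun s : Fin n → Fin 4 => s ≠ 0),
    δ ^ (psupp s).card * ‖coef A s‖ ^ 2

/-- The partial Fourier series `∂_J^γ(A) = ∑_{s : s_J = γ} Â_s σ_{s_{J^c}}`,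
encoded by a single Pauli index `v` with `supp v = J` and `v|_J = γ ∈ {1,2,3}^J`,
re-embedded in `M_2(ℂ)^{⊗n}` by tensoring with the identity on the qubits in `J`. -/
def dPartial {n : ℕ} (v : Fin n → Fin 4) (A : QOp n) : QOp n :=
  ∑ s ∈ Finset.univ.filter (fun s : Fin n → Fin 4 => ∀ j ∈ psupp v, s j = v j),
    coef A s • pauliString fun j => if j ∈ psupp v then 0 else s j

/-!
Pauli strings are orthonormal for `τ`, so
`‖P_t ∂_J^γ A‖_2² = ∑_s e^{-2t|supp s \ J|} |Â_s|²` over the `s` that restrict to `γ` on `J`.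
After exchanging the sums, a coefficient `|Â_s|²` with `|supp s| = m ≥ k` is counted once for
each of the `C(m, k)` subsets `J ⊆ supp s` of size `k` (then `γ = s|_J` is forced), each time
with weight
`∫_0^∞ (e^{2t} - 1)^{k-1} e^{-2mt} dt = (k-1)! / (2 m (m-1) ⋯ (m-k+1)) = 1 / (2k C(m, k))`.
-/

open MeasureTheory Real
open scoped Nat

lemma piecewise_eq_right_of_eqOn {ι α : Type*} [DecidableEq ι] {J : Finset ι} {u s : ι → α}
    (h : ∀ j ∈ J, s j = u j) :
    J.piecewise u s = s :=
  (J.piecewise_congr (fun j hj => (h j hj).symm) fun _ _ => rfl).trans (J.piecewise_same s)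

lemma sum_filter_eqOn_eq_sum_piecewise {ι α M : Type*} [Fintype ι] [DecidableEq ι] [Fintype α]
    [AddCommMonoid M] (J : Finset ι)
    (v w : ι → α) (f : (ι → α) → M) [DecidablePred fun s : ι → α => ∀ j ∈ J, s j = v j]
    [DecidablePred fun t : ι → α => ∀ j ∈ J, t j = w j] :
    ∑ s ∈ Finset.univ.filter (fun s : ι → α => ∀ j ∈ J, s j = v j), f s
      = ∑ t ∈ Finset.univ.filter (fun t : ι → α => ∀ j ∈ J, t j = w j), f (J.piecewise v t) := by
  refine Finset.sum_nbij' (fun s => J.piecewise w s) (fun t => J.piecewise v t)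
    ?_ ?_ ?_ ?_ ?_ <;> simp only [Finset.mem_filter, Finset.mem_univ, true_and]
  · exact fun s _ j hj => Finset.piecewise_eq_of_mem _ _ _ hj
  · exact fun t _ j hj => Finset.piecewise_eq_of_mem _ _ _ hj
  · exact fun s hs => by rw [Finset.piecewise_idem_right, piecewise_eq_right_of_eqOn hs]
  · exact fun t ht => by rw [Finset.piecewise_idem_right, piecewise_eq_right_of_eqOn ht]
  · exact fun s hs => by rw [Finset.piecewise_idem_right, piecewise_eq_right_of_eqOn hs]

lemma pauli_conjTranspose (a : Fin 4) : (pauli a)ᴴ = pauli a := by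
  fin_cases a <;> ext i j <;> fin_cases i <;> fin_cases j <;> simp [pauli]

lemma trace_pauli_mul (a b : Fin 4) : (pauli a * pauli b).trace = if a = b then 2 else 0 := by
  fin_cases a <;> fin_cases b <;>
    simp [pauli, Matrix.trace, Fin.sum_univ_two, Complex.ext_iff] <;> norm_num

lemma pauliString_conjTranspose {n : ℕ} (s : Fin n → Fin 4) :
    (pauliString s)ᴴ = pauliString s := by
  ext x y
  simp only [conjTranspose_apply, pauliString, of_apply, star_prod]
  exact Finset.prod_congr rfl fun j _ => by
    rw [← conjTranspose_apply, pauli_conjTranspose]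

lemma trace_mul_eq_sum_prod {l m R : Type*} [Fintype l] [Fintype m]
    [NonUnitalNonAssocSemiring R] (a : Matrix l m R) (b : Matrix m l R) :
    (a * b).trace = ∑ p : l × m, a p.1 p.2 * b p.2 p.1 := by
  simp [Matrix.trace, mul_apply, Fintype.sum_prod_type]

lemma trace_pauliString_mul {n : ℕ} (s t : Fin n → Fin 4) :
    (pauliString s * pauliString t).trace = ∏ j, (pauli (s j) * pauli (t j)).trace := by
  simp only [trace_mul_eq_sum_prod, Finset.prod_univ_sum, Fintype.piFinset_univ, pauliString,
    of_apply, ← Finset.prod_mul_distrib]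
  exact Fintype.sum_equiv (Equiv.arrowProdEquivProdArrow _ _ _).symm _ _ fun _ => rfl

lemma ntrace_pauliString_mul {n : ℕ} (s t : Fin n → Fin 4) :
    ntrace (pauliString s * pauliString t) = if s = t then 1 else 0 := by
  rw [ntrace, trace_pauliString_mul]
  simp only [trace_pauli_mul]
  split_ifs with h
  · subst h
    simp
  · obtain ⟨j, hj⟩ := Function.ne_iff.mp h
    rw [Finset.prod_eq_zero (Finset.mem_univ j) (if_neg hj), mul_zero]

lemma ntrace_sum_smul {n : ℕ} {ι : Type*} (s : Finset ι) (c : ι → ℂ) (M : ι → QOp n) :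
    ntrace (∑ i ∈ s, c i • M i) = ∑ i ∈ s, c i * ntrace (M i) := by
  simp only [ntrace, trace_sum, trace_smul, smul_eq_mul, Finset.mul_sum]
  exact Finset.sum_congr rfl fun _ _ => mul_left_comm _ _ _

lemma coef_sum_smul_pauliString {n : ℕ} (c : (Fin n → Fin 4) → ℂ) (u : Fin n → Fin 4) :
    coef (∑ t, c t • pauliString t) u = c u := by
  simp only [coef, Finset.mul_sum, mul_smul_comm, ntrace_sum_smul, ntrace_pauliString_mul,
    mul_ite, mul_one, mul_zero, Finset.sum_ite_eq, Finset.mem_univ, if_true]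

lemma traceAbsPow_two_nonneg {n : ℕ} (B : QOp n) : 0 ≤ traceAbsPow 2 B :=
  mul_nonneg (by positivity) (Finset.sum_nonneg fun i _ =>
    Real.rpow_nonneg (eigenvalues_conjTranspose_mul_self_nonneg B i) _)

lemma traceAbsPow_two_eq_re_ntrace {n : ℕ} (B : QOp n) :
    traceAbsPow 2 B = (ntrace (Bᴴ * B)).re := by
  rw [traceAbsPow, ntrace, (isHermitian_conjTranspose_mul_self B).trace_eq_sum_eigenvalues,
    show ((2 : ℂ) ^ n)⁻¹ = (((2 : ℝ) ^ n)⁻¹ : ℝ) by push_cast; rfl, Complex.re_ofReal_mul,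
    Complex.re_sum]
  norm_num

lemma pnorm_two_sq {n : ℕ} (B : QOp n) : pnorm 2 B ^ 2 = traceAbsPow 2 B := by
  rw [pnorm, ← Real.rpow_natCast, ← Real.rpow_mul (traceAbsPow_two_nonneg B)]
  norm_num

lemma pnorm_two_sq_sum_smul_pauliString {n : ℕ} (c : (Fin n → Fin 4) → ℂ) :
    pnorm 2 (∑ t, c t • pauliString t) ^ 2 = ∑ t, ‖c t‖ ^ 2 := by
  rw [pnorm_two_sq, traceAbsPow_two_eq_re_ntrace]
  have hcoef := coef_sum_smul_pauliString c
  simp only [coef] at hcoef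
  simp only [conjTranspose_sum, conjTranspose_smul, pauliString_conjTranspose, Finset.sum_mul,
    smul_mul_assoc, ntrace_sum_smul, hcoef, Complex.star_def, Complex.conj_mul']
  norm_cast

lemma mem_psupp {n : ℕ} {s : Fin n → Fin 4} {j : Fin n} : j ∈ psupp s ↔ s j ≠ 0 := by
  simp [psupp]

lemma psupp_piecewise_sdiff {n : ℕ} (J : Finset (Fin n)) (v t : Fin n → Fin 4) :
    psupp (J.piecewise v t) \ J = psupp t \ J := by
  ext j
  by_cases hj : j ∈ J <;> simp [hj, mem_psupp]

lemma psupp_piecewise_zero {n : ℕ} (J : Finset (Fin n)) (s : Fin n → Fin 4) :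
    psupp (J.piecewise s 0) = J ∩ psupp s := by
  ext j
  by_cases hj : j ∈ J <;> simp [hj, mem_psupp]

lemma dPartial_eq_sum {n : ℕ} (v : Fin n → Fin 4) (A : QOp n) :
    dPartial v A = ∑ t, (if ∀ j ∈ psupp v, t j = 0
      then coef A ((psupp v).piecewise v t) else 0) • pauliString t := by
  have h := sum_filter_eqOn_eq_sum_piecewise (psupp v) v 0
    fun s => coef A s • pauliString ((psupp v).piecewise 0 s)
  simp only [Finset.piecewise_idem_right, Pi.zero_apply] at h
  refine h.trans ?_
  rw [Finset.sum_filter]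
  refine Finset.sum_congr rfl fun t _ => ?_
  split_ifs with ht
  · rw [piecewise_eq_right_of_eqOn (u := 0) ht]
  · rw [zero_smul]

lemma coef_dPartial {n : ℕ} (v : Fin n → Fin 4) (A : QOp n) (u : Fin n → Fin 4) :
    coef (dPartial v A) u
      = if ∀ j ∈ psupp v, u j = 0 then coef A ((psupp v).piecewise v u) else 0 := by
  rw [dPartial_eq_sum, coef_sum_smul_pauliString]

lemma pnorm_two_noiseOp_dPartial_sq {n : ℕ} (δ : ℝ) (v : Fin n → Fin 4) (A : QOp n) :
    pnorm 2 (noiseOp δ (dPartial v A)) ^ 2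
      = ∑ s ∈ Finset.univ.filter (fun s : Fin n → Fin 4 => ∀ j ∈ psupp v, s j = v j),
          (δ ^ 2) ^ (psupp s \ psupp v).card * ‖coef A s‖ ^ 2 := by
  rw [noiseOp, pnorm_two_sq_sum_smul_pauliString, sum_filter_eqOn_eq_sum_piecewise _ v 0,
    Finset.sum_filter]
  refine Finset.sum_congr rfl fun t _ => ?_
  rw [coef_dPartial, psupp_piecewise_sdiff]
  simp only [Pi.zero_apply]
  split_ifs with ht
  · have hdisj : psupp t \ psupp v = psupp t :=
      Finset.sdiff_eq_self_of_disjoint (Finset.disjoint_left.mpr fun j hj hjv =>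
        mem_psupp.mp hj (ht j hjv))
    rw [hdisj, norm_mul, norm_pow, Complex.norm_real, Real.norm_eq_abs, mul_pow, ← pow_mul,
      pow_mul', sq_abs]
  · simp

lemma piecewise_psupp_zero {n : ℕ} (v : Fin n → Fin 4) : (psupp v).piecewise v 0 = v := by
  ext j
  by_cases hj : j ∈ psupp v
  · rw [Finset.piecewise_eq_of_mem _ _ _ hj]
  · rw [Finset.piecewise_eq_of_notMem _ _ _ hj, Pi.zero_apply, not_not.mp (mt mem_psupp.mpr hj)]

lemma psupp_subset_of_eqOn {n : ℕ} {v s : Fin n → Fin 4} (h : ∀ j ∈ psupp v, s j = v j) :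
    psupp v ⊆ psupp s :=
  fun j hj => mem_psupp.mpr (h j hj ▸ mem_psupp.mp hj)

lemma card_filter_psupp_card_eq_and_eqOn {n : ℕ} (k : ℕ) (s : Fin n → Fin 4) :
    (Finset.univ.filter (fun v : Fin n → Fin 4 =>
        (psupp v).card = k ∧ ∀ j ∈ psupp v, s j = v j)).card
      = (psupp s).card.choose k := by
  rw [← Finset.card_powersetCard]
  refine Finset.card_nbij' psupp (fun J => J.piecewise s 0) ?_ ?_ ?_ ?_
    <;> simp only [Set.MapsTo, Set.LeftInvOn, Set.RightInvOn, Finset.coe_filter,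
      Finset.mem_coe, Finset.mem_univ, true_and, Set.mem_ofPred_eq, Finset.mem_powersetCard]
  · exact fun v ⟨hk, hs⟩ => ⟨psupp_subset_of_eqOn hs, hk⟩
  · rintro J ⟨hJ, hk⟩
    rw [psupp_piecewise_zero, Finset.inter_eq_left.mpr hJ]
    exact ⟨hk, fun j hj => (Finset.piecewise_eq_of_mem _ _ _ hj).symm⟩
  · rintro v ⟨-, hs⟩
    rw [(psupp v).piecewise_congr hs fun _ _ => rfl, piecewise_psupp_zero]
  · rintro J ⟨hJ, -⟩
    rw [psupp_piecewise_zero, Finset.inter_eq_left.mpr hJ]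

lemma integrableOn_exp_sub_one_pow_mul_exp_neg {p m : ℕ} (h : p < m) :
    IntegrableOn (fun t : ℝ => (exp (2 * t) - 1) ^ p * exp (-(2 * m * t))) (Set.Ioi 0) := by
  have hpm : (0 : ℝ) < 2 * (m - p) := by
    have : (p : ℝ) < m := by exact_mod_cast h
    linarith
  refine Integrable.mono' (exp_neg_integrableOn_Ioi 0 hpm) (by fun_prop) ?_
  filter_upwards [ae_restrict_mem measurableSet_Ioi] with t (ht : 0 < t)
  have h1 : 0 ≤ exp (2 * t) - 1 := by linarith [one_le_exp (by linarith : 0 ≤ 2 * t)]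
  rw [Real.norm_of_nonneg (by positivity)]
  calc (exp (2 * t) - 1) ^ p * exp (-(2 * m * t))
      ≤ exp (2 * t) ^ p * exp (-(2 * m * t)) := by
        gcongr
        linarith
    _ = exp (-(2 * (m - p)) * t) := by
        rw [← exp_nat_mul, ← exp_add]
        ring_nf

/-- Writing `I(p, m)` for the integral, `e^{2t} = (e^{2t} - 1) + 1` gives
`I(p+1, m+1) = I(p, m) - I(p, m+1)`. -/
lemma integral_exp_sub_one_pow_mul_exp_neg {p m : ℕ} (h : p < m) :
    ∫ t in Set.Ioi (0 : ℝ), (exp (2 * t) - 1) ^ p * exp (-(2 * m * t))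
      = p ! / (2 * m.descFactorial (p + 1)) := by
  induction p generalizing m with
  | zero =>
    have hm : (0 : ℝ) < m := by exact_mod_cast h
    simp only [pow_zero, one_mul, ← neg_mul]
    rw [integral_exp_mul_Ioi (by linarith) 0]
    simp only [mul_zero, exp_zero, Nat.factorial_zero, Nat.cast_one, zero_add,
      Nat.descFactorial_one]
    field_simp
  | succ p ih =>
    obtain ⟨m, rfl⟩ : ∃ m', m = m' + 1 := ⟨m - 1, by omega⟩
    have hsplit : ∀ t : ℝ, (exp (2 * t) - 1) ^ (p + 1) * exp (-(2 * ↑(m + 1) * t))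
        = (exp (2 * t) - 1) ^ p * exp (-(2 * m * t))
          - (exp (2 * t) - 1) ^ p * exp (-(2 * ↑(m + 1) * t)) := by
      intro t
      have : exp (2 * t) * exp (-(2 * ↑(m + 1) * t)) = exp (-(2 * m * t)) := by
        rw [← exp_add]; push_cast; ring_nf
      linear_combination (exp (2 * t) - 1) ^ p * this
    simp only [hsplit]
    rw [integral_sub (integrableOn_exp_sub_one_pow_mul_exp_neg (by omega))
      (integrableOn_exp_sub_one_pow_mul_exp_neg (by omega)), ih (by omega), ih (by omega)]
    have hD : (m + 1).descFactorial (p + 1 + 1) = (m + 1) * m.descFactorial (p + 1) :=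
      Nat.succ_descFactorial_succ _ _
    have hE : (m + 1).descFactorial (p + 1 + 1) = (m - p) * (m + 1).descFactorial (p + 1) := by
      rw [Nat.descFactorial_succ]; congr 1; omega
    have hD0 : (0 : ℝ) < m.descFactorial (p + 1) := by
      exact_mod_cast Nat.descFactorial_pos.mpr (by omega)
    have hE0 : (0 : ℝ) < (m + 1).descFactorial (p + 1) := by
      exact_mod_cast Nat.descFactorial_pos.mpr (by omega)
    have hmp : ((m - p : ℕ) : ℝ) = m - p := by push_cast [Nat.cast_sub (by omega : p ≤ m)]; ring
    have key :
        ((m : ℝ) - p) * (m + 1).descFactorial (p + 1) = (m + 1) * m.descFactorial (p + 1) := by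
      rw [← hmp]; exact_mod_cast hE.symm.trans hD
    rw [hD, Nat.factorial_succ]
    push_cast
    field_simp
    linear_combination key

def semigroupWeight (k m : ℕ) : ℝ :=
  ∫ t in Set.Ioi (0 : ℝ), (exp (2 * t) - 1) ^ (k - 1) * exp (-(2 * m * t))

lemma two_mul_choose_mul_semigroupWeight {k m : ℕ} (hk : 1 ≤ k) (hkm : k ≤ m) :
    2 * k * m.choose k * semigroupWeight k m = 1 := by
  obtain ⟨p, rfl⟩ : ∃ p, k = p + 1 := ⟨k - 1, by omega⟩
  have hC : (0 : ℝ) < m.choose (p + 1) := by exact_mod_cast Nat.choose_pos hkm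
  rw [semigroupWeight, Nat.add_sub_cancel, integral_exp_sub_one_pow_mul_exp_neg (by omega),
    Nat.descFactorial_eq_factorial_mul_choose, Nat.factorial_succ]
  push_cast
  field_simp

lemma sum_psupp_card_eq_sum_eqOn {n : ℕ} {M : Type*} [AddCommMonoid M] (k : ℕ)
    (G : (Fin n → Fin 4) → M) :
    ∑ v ∈ Finset.univ.filter (fun v : Fin n → Fin 4 => (psupp v).card = k),
        ∑ s ∈ Finset.univ.filter (fun s : Fin n → Fin 4 => ∀ j ∈ psupp v, s j = v j), G s
      = ∑ s, (psupp s).card.choose k • G s := by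
  rw [Finset.sum_comm' (t' := Finset.univ) (s' := fun s => Finset.univ.filter
    fun v : Fin n → Fin 4 => (psupp v).card = k ∧ ∀ j ∈ psupp v, s j = v j) (by simp)]
  simp only [Finset.sum_const, card_filter_psupp_card_eq_and_eqOn]

lemma integral_pnorm_noiseOp_dPartial_sq {n k : ℕ} (hk : 1 ≤ k) {v : Fin n → Fin 4}
    (hv : (psupp v).card = k) (A : QOp n) :
    ∫ t in Set.Ioi (0 : ℝ), (exp (2 * t) - 1) ^ (k - 1) * exp (-(2 * k * t)) *
        pnorm 2 (noiseOp (exp (-t)) (dPartial v A)) ^ 2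
      = ∑ s ∈ Finset.univ.filter (fun s : Fin n → Fin 4 => ∀ j ∈ psupp v, s j = v j),
          ‖coef A s‖ ^ 2 * semigroupWeight k (psupp s).card := by
  have hcard : ∀ s ∈ Finset.univ.filter (fun s : Fin n → Fin 4 => ∀ j ∈ psupp v, s j = v j),
      (psupp s).card = (psupp s \ psupp v).card + k := fun s hs => by
    rw [← hv, Finset.card_sdiff_add_card_eq_card
      (psupp_subset_of_eqOn (Finset.mem_filter.mp hs).2)]
  have hintegrand : ∀ t : ℝ, (exp (2 * t) - 1) ^ (k - 1) * exp (-(2 * k * t)) *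
      pnorm 2 (noiseOp (exp (-t)) (dPartial v A)) ^ 2
        = ∑ s ∈ Finset.univ.filter (fun s : Fin n → Fin 4 => ∀ j ∈ psupp v, s j = v j),
          ‖coef A s‖ ^ 2 *
            ((exp (2 * t) - 1) ^ (k - 1) * exp (-(2 * (psupp s).card * t))) := by
    intro t
    rw [pnorm_two_noiseOp_dPartial_sq, Finset.mul_sum]
    refine Finset.sum_congr rfl fun s hs => ?_
    have hexp : (exp (-t) ^ 2) ^ (psupp s \ psupp v).card * exp (-(2 * k * t))
        = exp (-(2 * (psupp s).card * t)) := by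
      rw [← pow_mul, ← exp_nat_mul, ← exp_add, hcard s hs]
      push_cast
      ring_nf
    linear_combination (exp (2 * t) - 1) ^ (k - 1) * ‖coef A s‖ ^ 2 * hexp
  simp only [hintegrand]
  rw [integral_finsetSum _ fun s hs => ((integrableOn_exp_sub_one_pow_mul_exp_neg
    (by have := hcard s hs; omega)).const_mul _)]
  exact Finset.sum_congr rfl fun s _ => integral_const_mul _ _

theorem wGE_integral_representation_general (n k : ℕ) (hk1 : 1 ≤ k) (A : QOp n) :
    wGE k A = 2 * k *
      ∑ v ∈ Finset.univ.filter (fun v : Fin n → Fin 4 => (psupp v).card = k),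
        ∫ t in Set.Ioi (0 : ℝ),
          (Real.exp (2 * t) - 1) ^ (k - 1) * Real.exp (-(2 * k * t)) *
            pnorm 2 (noiseOp (Real.exp (-t)) (dPartial v A)) ^ 2 := by
  rw [Finset.sum_congr rfl fun v hv =>
      integral_pnorm_noiseOp_dPartial_sq hk1 (Finset.mem_filter.mp hv).2 A,
    sum_psupp_card_eq_sum_eqOn, wGE, Finset.sum_filter, Finset.mul_sum]
  refine Finset.sum_congr rfl fun s _ => ?_
  rw [nsmul_eq_mul]
  split_ifs with hks
  · linear_combination (-‖coef A s‖ ^ 2) * two_mul_choose_mul_semigroupWeight hk1 hks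
  · rw [Nat.choose_eq_zero_of_lt (not_le.mp hks)]
    simp

/-- **Lemma 4.2**: the semigroup integral representation of `W_{≥k}[A]`.
The double sum over subsets `J ⊆ [n]` with `|J| = k` and `γ ∈ {1,2,3}^k` is encoded
by a single Pauli index `v` with `|supp v| = k` (`J = supp v`, `γ = v|_J`), and
`∂_J^γ(A) ∈ M_2(ℂ)^{⊗Jᶜ}` is re-embedded in `M_2(ℂ)^{⊗n}`, where the depolarizing
semigroup `P_t = T_{e^{-t}}` restricts to that of `M_2(ℂ)^{⊗Jᶜ}` and the normalized
2-norms agree. -/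
theorem wGE_integral_representation (n k : ℕ) (hk1 : 1 ≤ k) (hkn : k ≤ n) (A : QOp n) :
    wGE k A = 2 * k *
      ∑ v ∈ Finset.univ.filter (fun v : Fin n → Fin 4 => (psupp v).card = k),
        ∫ t in Set.Ioi (0 : ℝ),
          (Real.exp (2 * t) - 1) ^ (k - 1) * Real.exp (-(2 * k * t)) *
            pnorm 2 (noiseOp (Real.exp (-t)) (dPartial v A)) ^ 2 :=
  wGE_integral_representation_general n k hk1 A

end
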